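/- Let Ω ⊂ ℝᴺ be a bounded domain, κ > 0, λ > 0, b > 0 constants, p > 1, and let v ∈ C²(cl Ω) be a positive solution of -Δv = λ f_κ(v) f_κ'(v) - b f_κ(v)^p f_κ'(v) in Ω with v = 0 on ∂Ω. Then b · f_κ(v(x))^{p-1} ≤ λ for all x ∈ Ω. -/

import Mathlib

open Real Filter Set

/-- `Fk κ t = ∫₀ᵗ √(1 + 2κ s²) ds`. -/
noncomputable def Fk (κ t : ℝ) : ℝ := ∫ s in (0:ℝ)..t, Real.sqrt (1 + 2*κ*s^2)

/-- `f` is the inverse of `Fk κ` on `[0,∞)`. -/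
def IsInvF (κ : ℝ) (f : ℝ → ℝ) : Prop :=
  (∀ s, 0 ≤ s → f (Fk κ s) = s) ∧ ∀ t, 0 ≤ t → 0 ≤ f t ∧ Fk κ (f t) = t

/-- The derivative formula `f_κ'(t) = (1 + 2κ f_κ(t)²)^{-1/2}`. -/
noncomputable def fd (κ : ℝ) (f : ℝ → ℝ) (t : ℝ) : ℝ :=
  1 / Real.sqrt (1 + 2*κ*(f t)^2)

/-- Laplacian of  at , computed with derivatives within . -/
noncomputable def lapWithin {N : ℕ} (v : EuclideanSpace ℝ (Fin N) → ℝ)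
    (s : Set (EuclideanSpace ℝ (Fin N))) (x : EuclideanSpace ℝ (Fin N)) : ℝ :=
  ∑ i : Fin N, iteratedFDerivWithin ℝ 2 v s x
    ![EuclideanSpace.single i 1, EuclideanSpace.single i 1]

/-!
At an interior maximum point `z` of `v` the Hessian is negative semidefinite, so `Δv(z) ≤ 0`, and
the equation gives `f(v z) f'(v z) (λ - b f(v z)^(p-1)) ≥ 0` with `f(v z), f'(v z) > 0`. Since
`f_κ` is increasing, `f(v x) ≤ f(v z)` for every `x`.
-/

open Topology

lemma Fk_monotone (κ : ℝ) : Monotone (Fk κ) := by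
  intro a c hac
  have hint : ∀ u w : ℝ, IntervalIntegrable (fun s => √(1 + 2*κ*s^2)) MeasureTheory.volume u w :=
    fun u w => (by fun_prop : Continuous fun s : ℝ => √(1 + 2*κ*s^2)).intervalIntegrable u w
  have hdiff : Fk κ c - Fk κ a = ∫ s in a..c, √(1 + 2*κ*s^2) :=
    intervalIntegral.integral_interval_sub_left (hint 0 c) (hint 0 a)
  have : 0 ≤ ∫ s in a..c, √(1 + 2*κ*s^2) :=
    intervalIntegral.integral_nonneg hac fun s _ => Real.sqrt_nonneg _
  linarith

namespace IsInvF

variable {κ : ℝ} {f : ℝ → ℝ}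

lemma nonneg (hf : IsInvF κ f) {t : ℝ} (ht : 0 ≤ t) : 0 ≤ f t := (hf.2 t ht).1

lemma pos (hf : IsInvF κ f) {t : ℝ} (ht : 0 < t) : 0 < f t := by
  refine (hf.nonneg ht.le).lt_of_ne fun h => ht.ne ?_
  rw [← (hf.2 t ht.le).2, ← h]
  simp [Fk]

lemma monotoneOn (hf : IsInvF κ f) : MonotoneOn f (Ici 0) := by
  intro s hs t ht hst
  by_contra! hlt
  have hts : t ≤ s := by
    simpa only [(hf.2 s hs).2, (hf.2 t ht).2] using Fk_monotone κ hlt.le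
  exact hlt.ne (by rw [le_antisymm hst hts])

end IsInvF

lemma fd_pos {κ : ℝ} (hκ : 0 ≤ κ) (f : ℝ → ℝ) (t : ℝ) : 0 < fd κ f t :=
  one_div_pos.2 (Real.sqrt_pos.2 (by positivity))

lemma mul_rpow_sub_one_le_of_nonneg {lam b p y d : ℝ} (hy : 0 < y) (hd : 0 < d)
    (h : 0 ≤ lam * y * d - b * y ^ p * d) : b * y ^ (p - 1) ≤ lam := by
  have hyp : y ^ p = y ^ (p - 1) * y := by
    rw [← Real.rpow_add_one hy.ne', sub_add_cancel]
  rw [hyp] at h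
  have : (b * y ^ (p - 1)) * (y * d) ≤ lam * (y * d) := by linarith
  exact le_of_mul_le_mul_right this (mul_pos hy hd)

lemma IsLocalMax.deriv_deriv_nonpos {g : ℝ → ℝ} {x₀ : ℝ} (hmax : IsLocalMax g x₀)
    (hc : ContinuousAt g x₀) : deriv (deriv g) x₀ ≤ 0 := by
  by_contra! hpos
  -- By the second derivative test `x₀` is also a local minimum, so `g` is locally constant.
  have hmin := isLocalMin_of_deriv_deriv_pos hpos hmax.deriv_eq_zero hc
  have hconst : g =ᶠ[𝓝 x₀] fun _ => g x₀ := by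
    filter_upwards [hmax, hmin] with x h₁ h₂ using le_antisymm h₁ h₂
  have hderiv : deriv g =ᶠ[𝓝 x₀] fun _ => 0 := by
    simpa using hconst.deriv
  simp [hderiv.deriv_eq] at hpos

lemma IsLocalMax.fderiv_fderiv_apply_self_nonpos {E : Type*} [NormedAddCommGroup E]
    [NormedSpace ℝ E] {v : E → ℝ} {z : E} (hmax : IsLocalMax v z) (hv : ContDiffAt ℝ 2 v z)
    (e : E) : fderiv ℝ (fderiv ℝ v) z e e ≤ 0 := by
  set l : ℝ → E := fun t => z + t • e
  have hl : ∀ t, HasDerivAt l e t := fun t => by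
    simpa [l] using ((hasDerivAt_id t).smul_const e).const_add z
  have hlc : Continuous l := by fun_prop
  have hl0 : l 0 = z := by simp [l]
  have hdiff : ∀ᶠ t in 𝓝 (0:ℝ), DifferentiableAt ℝ v (l t) := by
    refine hlc.continuousAt.eventually (f := l) ?_
    rw [hl0]
    exact (hv.eventually (by simp)).mono fun y hy => hy.differentiableAt (by simp)
  have hderiv : deriv (v ∘ l) =ᶠ[𝓝 (0:ℝ)] fun t => fderiv ℝ v (l t) e := by
    filter_upwards [hdiff] with t ht using (ht.hasFDerivAt.comp_hasDerivAt t (hl t)).deriv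
  have hfd : HasFDerivAt (fderiv ℝ v) (fderiv ℝ (fderiv ℝ v) z) (l 0) := by
    rw [hl0]
    exact ((hv.fderiv_right (m := 1) le_rfl).differentiableAt one_ne_zero).hasFDerivAt
  have hsecond : deriv (deriv (v ∘ l)) 0 = fderiv ℝ (fderiv ℝ v) z e e := by
    rw [hderiv.deriv_eq]
    exact ((hfd.comp_hasDerivAt 0 (hl 0)).clm_apply (hasDerivAt_const 0 e)).deriv.trans
      (by simp)
  rw [← hsecond]
  refine IsLocalMax.deriv_deriv_nonpos ?_ (hv.continuousAt.comp_of_eq hlc.continuousAt hl0)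
  rw [← hl0] at hmax
  exact hmax.comp_continuous hlc.continuousAt

lemma lapWithin_nonpos_of_isLocalMax {N : ℕ} {v : EuclideanSpace ℝ (Fin N) → ℝ}
    {s : Set (EuclideanSpace ℝ (Fin N))} {z : EuclideanSpace ℝ (Fin N)} (hs : s ∈ 𝓝 z)
    (hmax : IsLocalMax v z) (hv : ContDiffAt ℝ 2 v z) : lapWithin v s z ≤ 0 := by
  have hlocal : iteratedFDerivWithin ℝ 2 v s z = iteratedFDeriv ℝ 2 v z := by
    rw [← iteratedFDerivWithin_univ, ← iteratedFDerivWithin_inter (s := univ) hs, univ_inter]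
  refine Finset.sum_nonpos fun i _ => ?_
  rw [hlocal, iteratedFDeriv_two_apply]
  exact hmax.fderiv_fderiv_apply_self_nonpos hv _

lemma exists_mem_isMaxOn_closure_of_frontier_nonpos {E : Type*} [PseudoMetricSpace E]
    [ProperSpace E] {Ω : Set E} (hΩ : Bornology.IsBounded Ω) {v : E → ℝ}
    (hv : ContinuousOn v (closure Ω)) (hfr : ∀ y ∈ frontier Ω, v y ≤ 0)
    {x : E} (hx : x ∈ Ω) (hvx : 0 < v x) : ∃ z ∈ Ω, IsMaxOn v (closure Ω) z := by
  obtain ⟨z, hz, hzmax⟩ := (Metric.isCompact_of_isClosed_isBounded isClosed_closure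
    hΩ.closure).exists_isMaxOn ⟨x, subset_closure hx⟩ hv
  refine ⟨z, ?_, hzmax⟩
  by_contra hzΩ
  have : v x ≤ 0 :=
    (hzmax (subset_closure hx)).trans (hfr z ⟨hz, fun h => hzΩ (interior_subset h)⟩)
  linarith

theorem stmt_13_general {N : ℕ} (Ω : Set (EuclideanSpace ℝ (Fin N)))
    (hΩo : IsOpen Ω) (hΩb : Bornology.IsBounded Ω)
    (κ lam b p : ℝ) (hκ : 0 < κ) (hb : 0 < b) (hp : 1 < p)
    (fκ : ℝ → ℝ) (hfκ : IsInvF κ fκ)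
    (v : EuclideanSpace ℝ (Fin N) → ℝ)
    (hv : ContDiffOn ℝ 2 v (closure Ω))
    (hpos : ∀ x ∈ Ω, 0 < v x)
    (hbd : ∀ x ∈ frontier Ω, v x = 0)
    (heq : ∀ x ∈ Ω, -lapWithin v (closure Ω) x
        = lam * fκ (v x) * fd κ fκ (v x) - b * (fκ (v x)) ^ p * fd κ fκ (v x)) :
    ∀ x ∈ Ω, b * (fκ (v x)) ^ (p - 1) ≤ lam := by
  intro x hx
  obtain ⟨z, hzΩ, hzmax⟩ := exists_mem_isMaxOn_closure_of_frontier_nonpos hΩb hv.continuousOn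
    (fun y hy => (hbd y hy).le) hx (hpos x hx)
  have hnhds : closure Ω ∈ 𝓝 z := mem_of_superset (hΩo.mem_nhds hzΩ) subset_closure
  have hlap : lapWithin v (closure Ω) z ≤ 0 :=
    lapWithin_nonpos_of_isLocalMax hnhds (hzmax.isLocalMax hnhds) (hv.contDiffAt hnhds)
  have hz : b * fκ (v z) ^ (p - 1) ≤ lam :=
    mul_rpow_sub_one_le_of_nonneg (hfκ.pos (hpos z hzΩ)) (fd_pos hκ.le fκ (v z))
      (by linarith [heq z hzΩ])
  have hxz : fκ (v x) ≤ fκ (v z) :=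
    hfκ.monotoneOn (hpos x hx).le (hpos z hzΩ).le (hzmax (subset_closure hx))
  calc b * fκ (v x) ^ (p - 1) ≤ b * fκ (v z) ^ (p - 1) := by
        gcongr
        exact hfκ.nonneg (hpos x hx).le
    _ ≤ lam := hz

theorem stmt_13 {N : ℕ} (Ω : Set (EuclideanSpace ℝ (Fin N)))
    (hΩo : IsOpen Ω) (hΩc : IsConnected Ω) (hΩb : Bornology.IsBounded Ω)
    (κ lam b p : ℝ) (hκ : 0 < κ) (hlam : 0 < lam) (hb : 0 < b) (hp : 1 < p)
    (fκ : ℝ → ℝ) (hfκ : IsInvF κ fκ)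
    (v : EuclideanSpace ℝ (Fin N) → ℝ)
    (hv : ContDiffOn ℝ 2 v (closure Ω))
    (hpos : ∀ x ∈ Ω, 0 < v x)
    (hbd : ∀ x ∈ frontier Ω, v x = 0)
    (heq : ∀ x ∈ Ω, -lapWithin v (closure Ω) x
        = lam * fκ (v x) * fd κ fκ (v x) - b * (fκ (v x)) ^ p * fd κ fκ (v x)) :
    ∀ x ∈ Ω, b * (fκ (v x)) ^ (p - 1) ≤ lam :=
  stmt_13_general Ω hΩo hΩb κ lam b p hκ hb hp fκ hfκ v hv hpos hbd heq
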